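/- arXiv:1903.01117 — 3 statements merged into one kernel-verified Lean document; each statement's English description precedes it below -/
import Mathlib

section
/- Suppose the vectors (u_Ω, p_Ω, u_μ, p_μ, u_γ, p_γ, u_Γ) solve the full block system: A_Ω u_Ω + B_Ω p_Ω + G_Ω p_μ = g_Ω, B_Ωᵀ u_Ω = f_Ω, A_μ u_μ + B_μ p_μ = g_μ, G_Ωᵀ u_Ω + B_μᵀ u_μ + G_μ u_Γ = f_μ, A_γ u_γ + B_γ p_γ = g_γ, B_γᵀ u_γ + G_γ u_Γ = f_γ, G_μᵀ p_μ + G_γᵀ p_γ + A_Γ u_Γ = 0. Then the pressures (p_Ω, p_μ, p_γ) solve the reduced pressure system: S_Ω p_Ω + C_Ω p_μ = r_Ω, C_Ωᵀ p_Ω + S_μ p_μ + C_μ p_γ = r_μ, C_μᵀ p_μ + S_γ p_γ = r_γ, where S_Ω := B_Ωᵀ A_Ω⁻¹ B_Ω, S_μ := B_μᵀ A_μ⁻¹ B_μ + G_Ωᵀ A_Ω⁻¹ G_Ω + G_μ A_Γ⁻¹ G_μᵀ, S_γ := B_γᵀ A_γ⁻¹ B_γ + G_γ A_Γ⁻¹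 G_γᵀ, C_Ω := B_Ωᵀ A_Ω⁻¹ G_Ω, C_μ := G_μ A_Γ⁻¹ G_γᵀ, r_Ω := −f_Ω + B_Ωᵀ A_Ω⁻¹ g_Ω, r_μ := −f_μ + B_μᵀ A_μ⁻¹ g_μ + G_Ωᵀ A_Ω⁻¹ g_Ω, r_γ := −f_γ + B_γᵀ A_γ⁻¹ g_γ. -/
open Matrix

/-!
Each velocity block is eliminated through its own (invertible) diagonal block: from
`A u + w = g` one gets `C u = C A⁻¹ g - C A⁻¹ w` for every matrix `C`. Applying this to the
four momentum equations, with `C` the coupling matrices occurring in the three mass balance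
equations, turns those equations into the pressure system. The off-diagonal blocks appear
transposed, which is where the symmetry of `A_Ω` and `A_Γ` enters.
-/

section SchurElimination

variable {α : Type*} [CommRing α] {l n o : Type*} [Fintype n] [DecidableEq n]
  {A : Matrix n n α}

theorem mulVec_eq_of_mulVec_add_eq (hA : IsUnit A.det) {u w g : n → α} (h : A *ᵥ u + w = g)
    (C : Matrix l n α) : C *ᵥ u = (C * A⁻¹) *ᵥ g - (C * A⁻¹) *ᵥ w := by
  rw [← h, mulVec_add, add_sub_cancel_right, mulVec_mulVec, nonsing_inv_mul_cancel_right _ _ hA]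

theorem transpose_mul_nonsing_inv_mul (hA : A.IsSymm) (B : Matrix l n α)
    (C : Matrix n o α) : (B * A⁻¹ * C)ᵀ = Cᵀ * A⁻¹ * Bᵀ := by
  rw [transpose_mul, transpose_mul, hA.inv.eq, Matrix.mul_assoc]

end SchurElimination

theorem Matrix.PosDef.isUnit_det {n : Type*} [Fintype n] [DecidableEq n] {A : Matrix n n ℝ}
    (hA : A.PosDef) : IsUnit A.det :=
  (isUnit_iff_isUnit_det A).mp hA.isUnit

theorem Matrix.PosDef.isSymm {n : Type*} [Fintype n] {A : Matrix n n ℝ} (hA : A.PosDef) :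
    A.IsSymm :=
  isHermitian_iff_isSymm.mp hA.isHermitian

/-- If `(u_Ω, p_Ω, u_μ, p_μ, u_γ, p_γ, u_Γ)` solves the full block system of
the discretized mixed-dimensional Darcy problem, then the pressures
`(p_Ω, p_μ, p_γ)` solve the reduced (Schur complement) pressure system. -/
theorem darcy_full_to_pressure_system {nΩ mΩ nμ mμ nγ mγ nΓ : ℕ}
    (AΩ : Matrix (Fin nΩ) (Fin nΩ) ℝ)
    (Aμ : Matrix (Fin nμ) (Fin nμ) ℝ)
    (Aγ : Matrix (Fin nγ) (Fin nγ) ℝ)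
    (AΓ : Matrix (Fin nΓ) (Fin nΓ) ℝ)
    (BΩ : Matrix (Fin nΩ) (Fin mΩ) ℝ)
    (Bμ : Matrix (Fin nμ) (Fin mμ) ℝ)
    (Bγ : Matrix (Fin nγ) (Fin mγ) ℝ)
    (GΩ : Matrix (Fin nΩ) (Fin mμ) ℝ)
    (Gμ : Matrix (Fin mμ) (Fin nΓ) ℝ)
    (Gγ : Matrix (Fin mγ) (Fin nΓ) ℝ)
    (hAΩ : AΩ.PosDef) (hAμ : Aμ.PosDef) (hAγ : Aγ.PosDef) (hAΓ : AΓ.PosDef)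
    (uΩ : Fin nΩ → ℝ) (pΩ : Fin mΩ → ℝ)
    (uμ : Fin nμ → ℝ) (pμ : Fin mμ → ℝ)
    (uγ : Fin nγ → ℝ) (pγ : Fin mγ → ℝ)
    (uΓ : Fin nΓ → ℝ)
    (gΩ : Fin nΩ → ℝ) (fΩ : Fin mΩ → ℝ)
    (gμ : Fin nμ → ℝ) (fμ : Fin mμ → ℝ)
    (gγ : Fin nγ → ℝ) (fγ : Fin mγ → ℝ)
    -- the full block system
    (h1 : AΩ.mulVec uΩ + BΩ.mulVec pΩ + GΩ.mulVec pμ = gΩ)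
    (h2 : BΩᵀ.mulVec uΩ = fΩ)
    (h3 : Aμ.mulVec uμ + Bμ.mulVec pμ = gμ)
    (h4 : GΩᵀ.mulVec uΩ + Bμᵀ.mulVec uμ + Gμ.mulVec uΓ = fμ)
    (h5 : Aγ.mulVec uγ + Bγ.mulVec pγ = gγ)
    (h6 : Bγᵀ.mulVec uγ + Gγ.mulVec uΓ = fγ)
    (h7 : Gμᵀ.mulVec pμ + Gγᵀ.mulVec pγ + AΓ.mulVec uΓ = 0) :
    -- the reduced pressure system
    (BΩᵀ * AΩ⁻¹ * BΩ).mulVec pΩ + (BΩᵀ * AΩ⁻¹ * GΩ).mulVec pμ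
        = -fΩ + (BΩᵀ * AΩ⁻¹).mulVec gΩ ∧
    (BΩᵀ * AΩ⁻¹ * GΩ)ᵀ.mulVec pΩ
        + (Bμᵀ * Aμ⁻¹ * Bμ + GΩᵀ * AΩ⁻¹ * GΩ + Gμ * AΓ⁻¹ * Gμᵀ).mulVec pμ
        + (Gμ * AΓ⁻¹ * Gγᵀ).mulVec pγ
        = -fμ + (Bμᵀ * Aμ⁻¹).mulVec gμ + (GΩᵀ * AΩ⁻¹).mulVec gΩ ∧
    (Gμ * AΓ⁻¹ * Gγᵀ)ᵀ.mulVec pμ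
        + (Bγᵀ * Aγ⁻¹ * Bγ + Gγ * AΓ⁻¹ * Gγᵀ).mulVec pγ
        = -fγ + (Bγᵀ * Aγ⁻¹).mulVec gγ := by
  have hΩ : AΩ *ᵥ uΩ + (BΩ *ᵥ pΩ + GΩ *ᵥ pμ) = gΩ := by rwa [← add_assoc]
  have hΓ : AΓ *ᵥ uΓ + (Gμᵀ *ᵥ pμ + Gγᵀ *ᵥ pγ) = 0 := by rwa [add_comm]
  have elimBΩ := mulVec_eq_of_mulVec_add_eq hAΩ.isUnit_det hΩ BΩᵀ
  have elimGΩ := mulVec_eq_of_mulVec_add_eq hAΩ.isUnit_det hΩ GΩᵀ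
  have elimBμ := mulVec_eq_of_mulVec_add_eq hAμ.isUnit_det h3 Bμᵀ
  have elimBγ := mulVec_eq_of_mulVec_add_eq hAγ.isUnit_det h5 Bγᵀ
  have elimGμ := mulVec_eq_of_mulVec_add_eq hAΓ.isUnit_det hΓ Gμ
  have elimGγ := mulVec_eq_of_mulVec_add_eq hAΓ.isUnit_det hΓ Gγ
  refine ⟨?_, ?_, ?_⟩
  · rw [← h2, elimBΩ]
    simp only [mulVec_add, mulVec_mulVec]
    abel
  · rw [← h4, elimGΩ, elimBμ, elimGμ, transpose_mul_nonsing_inv_mul hAΩ.isSymm,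
      transpose_transpose]
    simp only [mulVec_add, add_mulVec, mulVec_zero, mulVec_mulVec]
    abel
  · rw [← h6, elimBγ, elimGγ, transpose_mul_nonsing_inv_mul hAΓ.isSymm, transpose_transpose]
    simp only [mulVec_add, add_mulVec, mulVec_zero, mulVec_mulVec]
    abel
end

section
/- Suppose the pressures (p_Ω, p_μ, p_γ) solve the reduced pressure system S_Ω p_Ω + C_Ω p_μ = r_Ω, C_Ωᵀ p_Ω + S_μ p_μ + C_μ p_γ = r_μ, C_μᵀ p_μ + S_γ p_γ = r_γ, and define the velocities by u_Ω := A_Ω⁻¹ (g_Ω − B_Ω p_Ω − G_Ω p_μ), u_μ := A_μ⁻¹ (g_μ − B_μ p_μ), u_γ := A_γ⁻¹ (g_γ − B_γ p_γ), u_Γ := −A_Γ⁻¹ (G_μᵀ p_μ + G_γᵀ p_γ). Then (u_Ω, p_Ω, u_μ, p_μ, u_γ, p_γ, u_Γ) solves the full block system: A_Ω u_Ω + B_Ω p_Ω + G_Ω p_μ = g_Ω, B_Ωᵀ u_Ω = f_Ω, A_μ u_μ + B_μ p_μ = g_μ, G_Ωᵀ u_Ω + B_μᵀ u_μ + G_μ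 u_Γ = f_μ, A_γ u_γ + B_γ p_γ = g_γ, B_γᵀ u_γ + G_γ u_Γ = f_γ, G_μᵀ p_μ + G_γᵀ p_γ + A_Γ u_Γ = 0. Here S_Ω := B_Ωᵀ A_Ω⁻¹ B_Ω, S_μ := B_μᵀ A_μ⁻¹ B_μ + G_Ωᵀ A_Ω⁻¹ G_Ω + G_μ A_Γ⁻¹ G_μᵀ, S_γ := B_γᵀ A_γ⁻¹ B_γ + G_γ A_Γ⁻¹ G_γᵀ, C_Ω := B_Ωᵀ A_Ω⁻¹ G_Ω, C_μ := G_μ A_Γ⁻¹ G_γᵀ, r_Ω := −f_Ω + B_Ωᵀ A_Ω⁻¹ g_Ω, r_μ := −f_μ + B_μᵀ A_μ⁻¹ g_μ + G_Ωᵀ A_Ω⁻¹ g_Ω, r_γ := −f_γ + B_γᵀ A_γ⁻¹ g_γ. -/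
/-!
The velocity equations hold by construction, since `A (A⁻¹ r) = r` for each invertible `A`.
Substituting the reconstructed velocities into the three mass-conservation equations turns
them, up to sign, into the three rows of the pressure system; the off-diagonal blocks match
because `A_Ω⁻¹` and `A_Γ⁻¹` are symmetric, so that `C_Ωᵀ = G_Ωᵀ A_Ω⁻¹ B_Ω` and
`C_μᵀ = G_γ A_Γ⁻¹ G_μᵀ`.
-/

open Matrix

namespace Matrix

variable {α n m k : Type*} [Fintype n]

theorem mulVec_nonsing_inv_mulVec [DecidableEq n] [CommRing α] {A : Matrix n n α}
    (hA : IsUnit A.det) (v : n → α) : A *ᵥ (A⁻¹ *ᵥ v) = v := by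
  rw [mulVec_mulVec, mul_nonsing_inv A hA, one_mulVec]

theorem IsSymm.transpose_mul_mul [CommSemiring α] {S : Matrix n n α} (hS : S.IsSymm)
    (B : Matrix m n α) (C : Matrix n k α) : (B * S * C)ᵀ = Cᵀ * S * Bᵀ := by
  rw [transpose_mul, transpose_mul, hS.eq, Matrix.mul_assoc]

theorem PosDef.isUnit_det_s5 [DecidableEq n] [Field α] [PartialOrder α] [StarRing α]
    {A : Matrix n n α} (hA : A.PosDef) : IsUnit A.det :=
  (isUnit_iff_isUnit_det A).1 hA.isUnit

end Matrix

/-- Conversely: if the pressures `(p_Ω, p_μ, p_γ)` solve the reduced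
(Schur complement) pressure system and the velocities are reconstructed by
`u_Ω = A_Ω⁻¹ (g_Ω − B_Ω p_Ω − G_Ω p_μ)`, `u_μ = A_μ⁻¹ (g_μ − B_μ p_μ)`,
`u_γ = A_γ⁻¹ (g_γ − B_γ p_γ)`, `u_Γ = −A_Γ⁻¹ (G_μᵀ p_μ + G_γᵀ p_γ)`, then the
full block system of the discretized mixed-dimensional Darcy problem holds. -/
theorem darcy_pressure_to_full_system {nΩ mΩ nμ mμ nγ mγ nΓ : ℕ}
    (AΩ : Matrix (Fin nΩ) (Fin nΩ) ℝ)
    (Aμ : Matrix (Fin nμ) (Fin nμ) ℝ)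
    (Aγ : Matrix (Fin nγ) (Fin nγ) ℝ)
    (AΓ : Matrix (Fin nΓ) (Fin nΓ) ℝ)
    (BΩ : Matrix (Fin nΩ) (Fin mΩ) ℝ)
    (Bμ : Matrix (Fin nμ) (Fin mμ) ℝ)
    (Bγ : Matrix (Fin nγ) (Fin mγ) ℝ)
    (GΩ : Matrix (Fin nΩ) (Fin mμ) ℝ)
    (Gμ : Matrix (Fin mμ) (Fin nΓ) ℝ)
    (Gγ : Matrix (Fin mγ) (Fin nΓ) ℝ)
    (hAΩ : AΩ.PosDef) (hAμ : Aμ.PosDef) (hAγ : Aγ.PosDef) (hAΓ : AΓ.PosDef)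
    (pΩ : Fin mΩ → ℝ) (pμ : Fin mμ → ℝ) (pγ : Fin mγ → ℝ)
    (gΩ : Fin nΩ → ℝ) (fΩ : Fin mΩ → ℝ)
    (gμ : Fin nμ → ℝ) (fμ : Fin mμ → ℝ)
    (gγ : Fin nγ → ℝ) (fγ : Fin mγ → ℝ)
    (uΩ : Fin nΩ → ℝ) (uμ : Fin nμ → ℝ) (uγ : Fin nγ → ℝ) (uΓ : Fin nΓ → ℝ)
    -- reconstructed velocities
    (huΩ : uΩ = AΩ⁻¹.mulVec (gΩ - BΩ.mulVec pΩ - GΩ.mulVec pμ))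
    (huμ : uμ = Aμ⁻¹.mulVec (gμ - Bμ.mulVec pμ))
    (huγ : uγ = Aγ⁻¹.mulVec (gγ - Bγ.mulVec pγ))
    (huΓ : uΓ = -AΓ⁻¹.mulVec (Gμᵀ.mulVec pμ + Gγᵀ.mulVec pγ))
    -- the reduced pressure system
    (hp1 : (BΩᵀ * AΩ⁻¹ * BΩ).mulVec pΩ + (BΩᵀ * AΩ⁻¹ * GΩ).mulVec pμ
        = -fΩ + (BΩᵀ * AΩ⁻¹).mulVec gΩ)
    (hp2 : (BΩᵀ * AΩ⁻¹ * GΩ)ᵀ.mulVec pΩ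
        + (Bμᵀ * Aμ⁻¹ * Bμ + GΩᵀ * AΩ⁻¹ * GΩ + Gμ * AΓ⁻¹ * Gμᵀ).mulVec pμ
        + (Gμ * AΓ⁻¹ * Gγᵀ).mulVec pγ
        = -fμ + (Bμᵀ * Aμ⁻¹).mulVec gμ + (GΩᵀ * AΩ⁻¹).mulVec gΩ)
    (hp3 : (Gμ * AΓ⁻¹ * Gγᵀ)ᵀ.mulVec pμ
        + (Bγᵀ * Aγ⁻¹ * Bγ + Gγ * AΓ⁻¹ * Gγᵀ).mulVec pγ
        = -fγ + (Bγᵀ * Aγ⁻¹).mulVec gγ) :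
    -- the full block system
    AΩ.mulVec uΩ + BΩ.mulVec pΩ + GΩ.mulVec pμ = gΩ ∧
    BΩᵀ.mulVec uΩ = fΩ ∧
    Aμ.mulVec uμ + Bμ.mulVec pμ = gμ ∧
    GΩᵀ.mulVec uΩ + Bμᵀ.mulVec uμ + Gμ.mulVec uΓ = fμ ∧
    Aγ.mulVec uγ + Bγ.mulVec pγ = gγ ∧
    Bγᵀ.mulVec uγ + Gγ.mulVec uΓ = fγ ∧
    Gμᵀ.mulVec pμ + Gγᵀ.mulVec pγ + AΓ.mulVec uΓ = 0 := by
  have sΩ : AΩ⁻¹.IsSymm := (isHermitian_iff_isSymm.1 hAΩ.isHermitian).inv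
  have sΓ : AΓ⁻¹.IsSymm := (isHermitian_iff_isSymm.1 hAΓ.isHermitian).inv
  rw [sΩ.transpose_mul_mul, transpose_transpose] at hp2
  rw [sΓ.transpose_mul_mul, transpose_transpose] at hp3
  subst huΩ huμ huγ huΓ
  refine ⟨?_, ?_, ?_, ?_, ?_, ?_, ?_⟩
  · rw [mulVec_nonsing_inv_mulVec hAΩ.isUnit_det_s5]; abel
  · simp only [mulVec_sub, mulVec_mulVec, ← Matrix.mul_assoc]
    linear_combination (norm := abel) -hp1
  · rw [mulVec_nonsing_inv_mulVec hAμ.isUnit_det_s5]; abel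
  · simp only [mulVec_sub, mulVec_add, mulVec_neg, add_mulVec, mulVec_mulVec,
      ← Matrix.mul_assoc] at hp2 ⊢
    linear_combination (norm := abel) -hp2
  · rw [mulVec_nonsing_inv_mulVec hAγ.isUnit_det_s5]; abel
  · simp only [mulVec_sub, mulVec_add, mulVec_neg, add_mulVec, mulVec_mulVec,
      ← Matrix.mul_assoc] at hp3 ⊢
    linear_combination (norm := abel) -hp3
  · rw [mulVec_neg, mulVec_nonsing_inv_mulVec hAΓ.isUnit_det_s5, add_neg_cancel]
end

section
/- Let A_Ω, A_μ, A_γ, A_Γ be symmetric positive definite real matrices and B_Ω, B_μ, B_γ, G_Ω, G_μ, G_γ real matrices of compatible sizes, and define S_Ω := B_Ωᵀ A_Ω⁻¹ B_Ω, S_μ := B_μᵀ A_μ⁻¹ B_μ + G_Ωᵀ A_Ω⁻¹ G_Ω + G_μ A_Γ⁻¹ G_μᵀ, S_γ := B_γᵀ A_γ⁻¹ B_γ + G_γ A_Γ⁻¹ G_γᵀ, C_Ω := B_Ωᵀ A_Ω⁻¹ G_Ω, C_μ := G_μ A_Γ⁻¹ G_γᵀ. Then the block pressure-system matrix S := [[S_Ω,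 C_Ω, 0], [C_Ωᵀ, S_μ, C_μ], [0, C_μᵀ, S_γ]] is symmetric and positive semidefinite. Moreover, if the only triple (p_Ω, p_μ, p_γ) satisfying B_Ω p_Ω + G_Ω p_μ = 0, B_μ p_μ = 0, B_γ p_γ = 0 and G_μᵀ p_μ + G_γᵀ p_γ = 0 is the zero triple, then S is positive definite. -/
/-!
Eliminating the fluxes from the mixed saddle-point system turns the pressure matrix into a
Schur complement: `S = Kᵀ A⁻¹ K`, where `A = diag(A_Ω, A_μ, A_γ, A_Γ)` is the global flux mass
matrix and `K` is the global coupling matrix whose block rows are `[B_Ω G_Ω 0]`, `[0 B_μ 0]`,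
`[0 0 B_γ]` and `[0 G_μᵀ G_γᵀ]`. Since `A⁻¹` is positive definite, `S` is positive semidefinite,
and positive definite exactly when `K` is injective, which is the kernel condition.
-/

open Matrix

namespace Matrix

theorem PosDef.fromBlocks_zero {m n R : Type*} [Fintype m] [Fintype n]
    [CommRing R] [PartialOrder R] [StarRing R] [StarOrderedRing R]
    {A : Matrix m m R} {D : Matrix n n R} (hA : A.PosDef) (hD : D.PosDef) :
    (fromBlocks A 0 0 D).PosDef := by
  refine of_dotProduct_mulVec_pos (hA.isHermitian.fromBlocks (by simp) hD.isHermitian)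
    fun x hx => ?_
  obtain ⟨u, v, rfl⟩ : ∃ u v, x = Sum.elim u v := ⟨_, _, (Sum.elim_comp_inl_inr x).symm⟩
  simp only [fromBlocks_mulVec, zero_mulVec, add_zero, zero_add, Function.star_sumElim,
    Sum.elim_comp_inl, Sum.elim_comp_inr, sumElim_dotProduct_sumElim]
  rcases eq_or_ne u 0 with rfl | hu
  · have hv : v ≠ 0 := by rintro rfl; exact hx Sum.elim_zero_zero
    simpa using hD.dotProduct_mulVec_pos hv
  · exact add_pos_of_pos_of_nonneg (hA.dotProduct_mulVec_pos hu)
      (hD.posSemidef.dotProduct_mulVec_nonneg v)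

end Matrix

section DarcyCoupling

variable {nΩ nμ nγ nΓ mΩ mμ mγ : Type*}
  (BΩ : Matrix nΩ mΩ ℝ) (Bμ : Matrix nμ mμ ℝ) (Bγ : Matrix nγ mγ ℝ)
  (GΩ : Matrix nΩ mμ ℝ) (Gμ : Matrix mμ nΓ ℝ) (Gγ : Matrix mγ nΓ ℝ)

def darcyCouplingMatrix : Matrix (nΩ ⊕ ((nμ ⊕ nγ) ⊕ nΓ)) (mΩ ⊕ (mμ ⊕ mγ)) ℝ :=
  fromBlocks BΩ (fromCols GΩ 0) 0 (fromRows (fromBlocks Bμ 0 0 Bγ) (fromCols Gμᵀ Gγᵀ))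

section MulVec

variable [Fintype mΩ] [Fintype mμ] [Fintype mγ]

theorem darcyCouplingMatrix_mulVec (pΩ : mΩ → ℝ) (pμ : mμ → ℝ) (pγ : mγ → ℝ) :
    darcyCouplingMatrix BΩ Bμ Bγ GΩ Gμ Gγ *ᵥ Sum.elim pΩ (Sum.elim pμ pγ) =
      Sum.elim (BΩ *ᵥ pΩ + GΩ *ᵥ pμ)
        (Sum.elim (Sum.elim (Bμ *ᵥ pμ) (Bγ *ᵥ pγ)) (Gμᵀ *ᵥ pμ + Gγᵀ *ᵥ pγ)) := by
  simp [darcyCouplingMatrix, fromBlocks_mulVec, fromRows_mulVec]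

theorem injective_mulVec_darcyCouplingMatrix
    (hker : ∀ (pΩ : mΩ → ℝ) (pμ : mμ → ℝ) (pγ : mγ → ℝ),
      BΩ *ᵥ pΩ + GΩ *ᵥ pμ = 0 → Bμ *ᵥ pμ = 0 → Bγ *ᵥ pγ = 0 → Gμᵀ *ᵥ pμ + Gγᵀ *ᵥ pγ = 0 →
        pΩ = 0 ∧ pμ = 0 ∧ pγ = 0) :
    Function.Injective (darcyCouplingMatrix BΩ Bμ Bγ GΩ Gμ Gγ).mulVec := by
  refine (injective_iff_map_eq_zero (darcyCouplingMatrix BΩ Bμ Bγ GΩ Gμ Gγ).mulVecLin).mpr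
    fun p hp => ?_
  obtain ⟨pΩ, pμ, pγ, rfl⟩ : ∃ pΩ pμ pγ, p = Sum.elim pΩ (Sum.elim pμ pγ) :=
    ⟨_, _, _, by rw [Sum.elim_comp_inl_inr, Sum.elim_comp_inl_inr]⟩
  rw [mulVecLin_apply, darcyCouplingMatrix_mulVec] at hp
  simp only [← Sum.elim_zero_zero, Sum.elim_eq_iff] at hp
  obtain ⟨rfl, rfl, rfl⟩ := hker pΩ pμ pγ hp.1 hp.2.1.1 hp.2.1.2 hp.2.2
  simp

end MulVec

theorem darcyPressureMatrix_eq_transpose_mul_mul [Fintype nΩ] [Fintype nμ] [Fintype nγ]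
    [Fintype nΓ] (WΩ : Matrix nΩ nΩ ℝ) (Wμ : Matrix nμ nμ ℝ) (Wγ : Matrix nγ nγ ℝ)
    (WΓ : Matrix nΓ nΓ ℝ) (hWΩ : WΩ.IsSymm) (hWΓ : WΓ.IsSymm) :
    fromBlocks (BΩᵀ * WΩ * BΩ) (fromCols (BΩᵀ * WΩ * GΩ) 0)
        (fromRows (BΩᵀ * WΩ * GΩ)ᵀ (0 : Matrix mγ mΩ ℝ))
        (fromBlocks (Bμᵀ * Wμ * Bμ + GΩᵀ * WΩ * GΩ + Gμ * WΓ * Gμᵀ) (Gμ * WΓ * Gγᵀ)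
          (Gμ * WΓ * Gγᵀ)ᵀ (Bγᵀ * Wγ * Bγ + Gγ * WΓ * Gγᵀ)) =
      (darcyCouplingMatrix BΩ Bμ Bγ GΩ Gμ Gγ)ᵀ *
        fromBlocks WΩ 0 0 (fromBlocks (fromBlocks Wμ 0 0 Wγ) 0 0 WΓ) *
        darcyCouplingMatrix BΩ Bμ Bγ GΩ Gμ Gγ := by
  simp only [darcyCouplingMatrix, fromBlocks_transpose, transpose_zero, transpose_fromCols,
    transpose_fromRows, transpose_transpose, fromBlocks_multiply, fromRows_mul,
    fromCols_mul_fromBlocks, mul_fromCols, fromCols_mul_fromRows, transpose_mul, hWΩ.eq, hWΓ.eq,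
    Matrix.mul_zero, Matrix.zero_mul, add_zero, zero_add, Matrix.mul_assoc, fromBlocks_inj,
    true_and]
  rw [← fromRows_zero, fromCols_fromRows_eq_fromBlocks, fromCols_fromRows_eq_fromBlocks,
    fromBlocks_add, fromBlocks_add]
  simp only [zero_add]
  congr 1
  abel

end DarcyCoupling

/-- The 3×3 block coefficient matrix `S = [[S_Ω, C_Ω, 0], [C_Ωᵀ, S_μ, C_μ],
[0, C_μᵀ, S_γ]]` of the pressure matrix formulation of the discretized
mixed-dimensional Darcy problem is symmetric positive semidefinite, and
positive definite under the joint kernel condition on `B_Ω, G_Ω, B_μ, B_γ,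
G_μᵀ, G_γᵀ`. -/
theorem darcy_pressure_matrix_posSemidef_and_posDef {nΩ mΩ nμ mμ nγ mγ nΓ : ℕ}
    (AΩ : Matrix (Fin nΩ) (Fin nΩ) ℝ)
    (Aμ : Matrix (Fin nμ) (Fin nμ) ℝ)
    (Aγ : Matrix (Fin nγ) (Fin nγ) ℝ)
    (AΓ : Matrix (Fin nΓ) (Fin nΓ) ℝ)
    (BΩ : Matrix (Fin nΩ) (Fin mΩ) ℝ)
    (Bμ : Matrix (Fin nμ) (Fin mμ) ℝ)
    (Bγ : Matrix (Fin nγ) (Fin mγ) ℝ)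
    (GΩ : Matrix (Fin nΩ) (Fin mμ) ℝ)
    (Gμ : Matrix (Fin mμ) (Fin nΓ) ℝ)
    (Gγ : Matrix (Fin mγ) (Fin nΓ) ℝ)
    (hAΩ : AΩ.PosDef) (hAμ : Aμ.PosDef) (hAγ : Aγ.PosDef) (hAΓ : AΓ.PosDef) :
    -- the pressure-system block matrix
    let SΩ := BΩᵀ * AΩ⁻¹ * BΩ
    let Sμ := Bμᵀ * Aμ⁻¹ * Bμ + GΩᵀ * AΩ⁻¹ * GΩ + Gμ * AΓ⁻¹ * Gμᵀ
    let Sγ := Bγᵀ * Aγ⁻¹ * Bγ + Gγ * AΓ⁻¹ * Gγᵀ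
    let CΩ := BΩᵀ * AΩ⁻¹ * GΩ
    let Cμ := Gμ * AΓ⁻¹ * Gγᵀ
    let S : Matrix (Fin mΩ ⊕ (Fin mμ ⊕ Fin mγ)) (Fin mΩ ⊕ (Fin mμ ⊕ Fin mγ)) ℝ :=
      Matrix.fromBlocks SΩ (Matrix.fromCols CΩ 0)
        (Matrix.fromRows CΩᵀ (0 : Matrix (Fin mγ) (Fin mΩ) ℝ))
        (Matrix.fromBlocks Sμ Cμ Cμᵀ Sγ)
    S.IsSymm ∧ S.PosSemidef ∧
    ((∀ (pΩ : Fin mΩ → ℝ) (pμ : Fin mμ → ℝ) (pγ : Fin mγ → ℝ),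
        BΩ.mulVec pΩ + GΩ.mulVec pμ = 0 → Bμ.mulVec pμ = 0 →
        Bγ.mulVec pγ = 0 → Gμᵀ.mulVec pμ + Gγᵀ.mulVec pγ = 0 →
        pΩ = 0 ∧ pμ = 0 ∧ pγ = 0) →
      S.PosDef) := by
  intro SΩ Sμ Sγ CΩ Cμ S
  set K := darcyCouplingMatrix BΩ Bμ Bγ GΩ Gμ Gγ
  set D := fromBlocks AΩ⁻¹ 0 0 (fromBlocks (fromBlocks Aμ⁻¹ 0 0 Aγ⁻¹) 0 0 AΓ⁻¹)
  have hD : D.PosDef :=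
    hAΩ.inv.fromBlocks_zero ((hAμ.inv.fromBlocks_zero hAγ.inv).fromBlocks_zero hAΓ.inv)
  have hS : S = Kᴴ * D * K := by
    rw [conjTranspose_eq_transpose_of_trivial]
    exact darcyPressureMatrix_eq_transpose_mul_mul BΩ Bμ Bγ GΩ Gμ Gγ _ _ _ _
      (isHermitian_iff_isSymm.mp hAΩ.inv.isHermitian)
      (isHermitian_iff_isSymm.mp hAΓ.inv.isHermitian)
  have hS_psd : S.PosSemidef := hS ▸ hD.posSemidef.conjTranspose_mul_mul_same K
  exact ⟨isHermitian_iff_isSymm.mp hS_psd.isHermitian, hS_psd, fun hker =>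
    hS ▸ hD.conjTranspose_mul_mul_same (injective_mulVec_darcyCouplingMatrix _ _ _ _ _ _ hker)⟩
end
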